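/- arXiv:2604.03812 — 3 statements merged into one kernel-verified Lean document; each statement's English description precedes it below -/
import Mathlib

section
/- Let V be a finite-dimensional vector space over F2 of dimension k, and let x_1, ..., x_m be elements of V. Then there exists a subset S of {1,...,m} with |S| ≥ m - k such that the sum of x_i over i in S equals zero. -/
private lemma char2_add_self {V : Type*} [AddCommGroup V] [Module (ZMod 2) V] (v : V) :
    v + v = 0 := by
  have h : ((2 : ℕ) : ZMod 2) • v = 0 := by
    have h2 : ((2 : ℕ) : ZMod 2) = 0 := by decide
    rw [h2, zero_smul]
  rw [Nat.cast_smul_eq_nsmul] at h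
  simpa [two_nsmul] using h

private lemma sum_symmDiff_eq {V : Type*} [AddCommGroup V] [Module (ZMod 2) V]
    {ι : Type*} [DecidableEq ι] (S1 S2 : Finset ι) (x : ι → V) :
    ∑ i ∈ symmDiff S1 S2, x i = ∑ i ∈ S1, x i + ∑ i ∈ S2, x i := by
  have h1 : ∑ i ∈ S1 ∪ S2, x i + ∑ i ∈ S1 ∩ S2, x i
      = ∑ i ∈ S1, x i + ∑ i ∈ S2, x i := Finset.sum_union_inter
  have h2 : symmDiff S1 S2 = (S1 ∪ S2) \ (S1 ∩ S2) := by
    ext i; simp [symmDiff, Finset.mem_union, Finset.mem_inter, Finset.mem_sdiff]; tauto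
  have hsub : S1 ∩ S2 ⊆ S1 ∪ S2 := (Finset.inter_subset_left).trans Finset.subset_union_left
  rw [h2, Finset.sum_sdiff_eq_sub hsub, ← h1]
  have h3 := char2_add_self (∑ i ∈ S1 ∩ S2, x i)
  rw [sub_eq_add_neg, neg_eq_of_add_eq_zero_right h3]

private lemma aux_subset_sum (V : Type*) [AddCommGroup V] [Module (ZMod 2) V]
    [FiniteDimensional (ZMod 2) V] (k : ℕ) (hk : Module.finrank (ZMod 2) V = k)
    {ι : Type*} [DecidableEq ι] (A : Finset ι) (x : ι → V) :
    ∃ S : Finset ι, S ⊆ A ∧ A.card - k ≤ S.card ∧ ∑ i ∈ S, x i = 0 := by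
  induction A using Finset.strongInduction with
  | _ A ih =>
    haveI : Finite V := Module.finite_of_finite (ZMod 2)
    haveI : Fintype V := Fintype.ofFinite V
    by_cases hinj : Set.InjOn (fun S : Finset ι => ∑ i ∈ S, x i) A.powerset
    · refine ⟨∅, Finset.empty_subset _, ?_, by simp⟩
      have hcard : A.powerset.card ≤ Fintype.card V := by
        have := Finset.card_le_card_of_injOn (fun S : Finset ι => ∑ i ∈ S, x i)
          (fun S _ => Finset.mem_univ _) hinj
        simpa using this
      have hV : Fintype.card V = 2 ^ k := by
        rw [Module.card_eq_pow_finrank (K := ZMod 2) (V := V), hk]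
        simp [ZMod.card]
      rw [Finset.card_powerset, hV] at hcard
      have : A.card ≤ k := (Nat.pow_le_pow_iff_right (by norm_num)).mp hcard
      omega
    · rw [Set.InjOn] at hinj
      push_neg at hinj
      obtain ⟨S1, hS1, S2, hS2, hsum, hne⟩ := hinj
      simp only [Finset.coe_powerset, Set.mem_preimage, Set.mem_powerset_iff,
        Finset.coe_subset, Finset.mem_coe, Finset.mem_powerset] at hS1 hS2
      set T := symmDiff S1 S2 with hT
      have hTsum : ∑ i ∈ T, x i = 0 := by
        rw [hT, sum_symmDiff_eq, hsum]
        exact char2_add_self _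
      have hTA : T ⊆ A := by
        intro i hi
        rcases Finset.mem_union.mp (symmDiff_le_sup (a := S1) (b := S2) hi) with h | h
        · exact hS1 h
        · exact hS2 h
      have hTne : T.Nonempty := by
        rw [Finset.nonempty_iff_ne_empty]
        intro h
        exact hne (symmDiff_eq_bot.mp h)
      have hss : A \ T ⊂ A := by
        apply Finset.sdiff_ssubset hTA hTne
      obtain ⟨S', hS'sub, hS'card, hS'sum⟩ := ih (A \ T) hss
      refine ⟨T ∪ S', ?_, ?_, ?_⟩
      · exact Finset.union_subset hTA (hS'sub.trans (Finset.sdiff_subset))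
      · have hdisj : Disjoint T S' := by
          exact Finset.disjoint_sdiff.mono_right hS'sub
        rw [Finset.card_union_of_disjoint hdisj]
        have h1 : (A \ T).card = A.card - T.card := Finset.card_sdiff_of_subset hTA
        have h2 : T.card ≤ A.card := Finset.card_le_card hTA
        omega
      · have hdisj : Disjoint T S' := by
          exact Finset.disjoint_sdiff.mono_right hS'sub
        rw [Finset.sum_union hdisj, hTsum, hS'sum, add_zero]

theorem stmt_0 (V : Type*) [AddCommGroup V] [Module (ZMod 2) V]
    [FiniteDimensional (ZMod 2) V] (k : ℕ) (hk : Module.finrank (ZMod 2) V = k)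
    (m : ℕ) (x : Fin m → V) :
    ∃ S : Finset (Fin m), m - k ≤ S.card ∧ ∑ i ∈ S, x i = 0 := by
  obtain ⟨S, _, hcard, hsum⟩ := aux_subset_sum V k hk (Finset.univ : Finset (Fin m)) x
  exact ⟨S, by simpa using hcard, hsum⟩
end

section
/- Let V be a finite-dimensional vector space over F2 of dimension k, and let x_1, ..., x_m be elements of V with m > k. Then there exists a nonempty subset S of {1,...,m} with |S| ≥ m - k such that the sum of x_i over i in S equals zero. -/
open Finset

lemma aux_zero_sum {V : Type*} [AddCommGroup V] [Module (ZMod 2) V]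
    [FiniteDimensional (ZMod 2) V] {k : ℕ} (hk : Module.finrank (ZMod 2) V = k)
    {m : ℕ} (x : Fin m → V) (T : Finset (Fin m)) (hT : k < T.card) :
    ∃ S ⊆ T, S.Nonempty ∧ ∑ i ∈ S, x i = 0 := by
  classical
  have hnli : ¬ LinearIndependent (ZMod 2) (fun i : T => x i) := by
    intro h
    have := h.fintype_card_le_finrank
    rw [Fintype.card_coe, hk] at this
    omega
  rw [Fintype.not_linearIndependent_iff] at hnli
  obtain ⟨g, hg, i0, hi0⟩ := hnli
  refine ⟨(T.attach.filter (fun i => g i ≠ 0)).map ⟨Subtype.val, Subtype.val_injective⟩,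
    ?_, ?_, ?_⟩
  · intro j hj
    simp only [Finset.mem_map, Finset.mem_filter, Finset.mem_attach, true_and,
      Function.Embedding.coeFn_mk] at hj
    obtain ⟨⟨j', hj'⟩, _, rfl⟩ := hj
    exact hj'
  · refine Finset.Nonempty.map ⟨i0, ?_⟩
    simp [hi0]
  · rw [Finset.sum_map]
    simp only [Function.Embedding.coeFn_mk]
    have h1 : ∀ i ∈ T.attach.filter (fun i => g i ≠ 0), x i.val = g i • x i.val := by
      intro i hi
      simp only [Finset.mem_filter] at hi
      rw [(by decide : ∀ a : ZMod 2, a ≠ 0 → a = 1) _ hi.2, one_smul]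
    rw [Finset.sum_congr rfl h1]
    rw [Finset.sum_filter]
    have h2 : ∑ i ∈ T.attach, (if g i ≠ 0 then g i • x i.val else 0)
        = ∑ i ∈ T.attach, g i • x i.val := by
      apply Finset.sum_congr rfl
      intro i _
      by_cases h : g i = 0 <;> simp [h]
    rw [h2, Finset.attach_eq_univ]
    exact hg

lemma aux_rec {V : Type*} [AddCommGroup V] [Module (ZMod 2) V]
    [FiniteDimensional (ZMod 2) V] {k : ℕ} (hk : Module.finrank (ZMod 2) V = k)
    {m : ℕ} (x : Fin m → V) :
    ∀ n (T : Finset (Fin m)), T.card ≤ n →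
      ∃ S ⊆ T, T.card - k ≤ S.card ∧ ∑ i ∈ S, x i = 0 ∧ (k < T.card → S.Nonempty) := by
  intro n
  induction n with
  | zero =>
    intro T hT
    refine ⟨∅, Finset.empty_subset _, by omega, by simp, by omega⟩
  | succ n ih =>
    intro T hT
    by_cases hc : k < T.card
    · obtain ⟨S₀, hS₀T, hS₀ne, hS₀sum⟩ := aux_zero_sum hk x T hc
      have hcard : (T \ S₀).card = T.card - S₀.card := Finset.card_sdiff_of_subset hS₀T
      have hS₀pos : 0 < S₀.card := Finset.card_pos.mpr hS₀ne
      obtain ⟨S₁, hS₁, hS₁card, hS₁sum, _⟩ := ih (T \ S₀) (by omega)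
      have hdisj : Disjoint S₀ S₁ :=
        Finset.disjoint_left.mpr fun a ha ha' => (Finset.mem_sdiff.mp (hS₁ ha')).2 ha
      refine ⟨S₀ ∪ S₁, ?_, ?_, ?_, ?_⟩
      · exact Finset.union_subset hS₀T (hS₁.trans (Finset.sdiff_subset))
      · rw [Finset.card_union_of_disjoint hdisj]
        have hS₀le : S₀.card ≤ T.card := Finset.card_le_card hS₀T
        omega
      · rw [Finset.sum_union hdisj, hS₀sum, hS₁sum, add_zero]
      · intro _
        exact Finset.Nonempty.inl hS₀ne
    · exact ⟨∅, Finset.empty_subset _, by omega, by simp, by omega⟩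

theorem stmt_1 (V : Type*) [AddCommGroup V] [Module (ZMod 2) V]
    [FiniteDimensional (ZMod 2) V] (k : ℕ) (hk : Module.finrank (ZMod 2) V = k)
    (m : ℕ) (hm : m > k) (x : Fin m → V) :
    ∃ S : Finset (Fin m), S.Nonempty ∧ m - k ≤ S.card ∧ ∑ i ∈ S, x i = 0 := by
  obtain ⟨S, _, hcard, hsum, hne⟩ :=
    aux_rec hk x m Finset.univ (by simp)
  refine ⟨S, hne (by simp [hm]), by simpa using hcard, hsum⟩
end

section
/- Let V be a vector space over F2 and x_1, ..., x_m elements of V with r := dim span{x_1,...,x_m}. Then there exists a subset S of {1,...,m} with |S| ≥ m - r whose sum is zero. -/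
open Finset Module

theorem stmt_2 (V : Type*) [AddCommGroup V] [Module (ZMod 2) V]
    (m : ℕ) (x : Fin m → V) (r : ℕ)
    (hr : Module.finrank (ZMod 2) (Submodule.span (ZMod 2) (Set.range x)) = r) :
    ∃ S : Finset (Fin m), m - r ≤ S.card ∧ ∑ i ∈ S, x i = 0 := by
  classical
  set f : (Fin m → ZMod 2) →ₗ[ZMod 2] V :=
    Fintype.linearCombination (ZMod 2) x with hf
  set K := LinearMap.ker f with hKdef
  have hK : finrank (ZMod 2) K = m - r := by
    have h1 := LinearMap.finrank_range_add_finrank_ker f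
    rw [show LinearMap.range f = Submodule.span (ZMod 2) (Set.range x) from
      Fintype.range_linearCombination _ _, hr] at h1
    have hm : finrank (ZMod 2) (Fin m → ZMod 2) = m := by simp
    rw [hm] at h1
    rw [hKdef]
    omega
  -- weight function
  set wt : (Fin m → ZMod 2) → ℕ := fun v => (univ.filter (fun i => v i ≠ 0)).card with hwt
  -- pick v in K of maximal weight
  obtain ⟨v, hvK, hvmax⟩ :=
    Finset.exists_max_image (univ.filter (· ∈ K)) wt ⟨0, by simp⟩
  have hvK' : v ∈ K := (Finset.mem_filter.mp hvK).2
  set S : Finset (Fin m) := univ.filter (fun i => v i ≠ 0) with hS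
  have hone : ∀ a : ZMod 2, a ≠ 0 → a = 1 := by decide
  refine ⟨S, ?_, ?_⟩
  · -- |S| ≥ m - r
    by_contra hlt
    push_neg at hlt
    -- restriction map to coordinates in S
    let g : K →ₗ[ZMod 2] ((↥S) → ZMod 2) :=
      { toFun := fun u i => (u : Fin m → ZMod 2) (i : Fin m)
        map_add' := fun u w => rfl
        map_smul' := fun c u => rfl }
    have hginj : ¬ Function.Injective g := by
      intro hinj
      have := LinearMap.finrank_le_finrank_of_injective hinj
      rw [hK] at this
      have : finrank (ZMod 2) ((↥S) → ZMod 2) = S.card := by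
        simp [Module.finrank_pi]
      omega
    rw [Function.not_injective_iff] at hginj
    obtain ⟨u1, u2, hgu, hne⟩ := hginj
    set u : Fin m → ZMod 2 := (u1 : Fin m → ZMod 2) - (u2 : Fin m → ZMod 2) with hu
    have huK : u ∈ K := K.sub_mem u1.2 u2.2
    have hune : u ≠ 0 := by
      intro h
      apply hne
      ext i
      have := congrFun h i
      simp only [hu, Pi.sub_apply, Pi.zero_apply, sub_eq_zero] at this
      exact this
    have huS : ∀ i ∈ S, u i = 0 := by
      intro i hi
      have := congrFun hgu ⟨i, hi⟩
      simp only [g, LinearMap.coe_mk, AddHom.coe_mk] at this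
      simp [hu, this]
    -- v + u has larger weight
    have hdisj : Disjoint S (univ.filter (fun i => u i ≠ 0)) := by
      rw [Finset.disjoint_left]
      intro i hi h2
      exact (Finset.mem_filter.mp h2).2 (huS i hi)
    have hwtvu : wt (v + u) = wt v + wt u := by
      have hunion : univ.filter (fun i => (v + u) i ≠ 0)
          = S ∪ univ.filter (fun i => u i ≠ 0) := by
        ext i
        simp only [Finset.mem_filter, Finset.mem_union, Finset.mem_univ, true_and, hS,
          Pi.add_apply]
        constructor
        · intro h
          by_cases h1 : v i = 0
          · right; intro h2; apply h; rw [h1, h2, add_zero]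
          · left; exact h1
        · rintro (h1 | h1) h2
          · have h3 : u i = 0 := huS i (by simp [hS, h1])
            rw [h3, add_zero] at h2; exact h1 h2
          · have h3 : v i = 0 := by
              by_contra h3
              have hiS : i ∈ S := by simpa [hS] using h3
              have hiT : i ∈ univ.filter (fun j => u j ≠ 0) := by simpa using h1
              exact (Finset.disjoint_left.mp hdisj hiS hiT).elim
            rw [h3, zero_add] at h2; exact h1 h2
      rw [hwt]
      simp only
      rw [hunion, Finset.card_union_of_disjoint hdisj]
    have hupos : 0 < wt u := by
      rcases Function.ne_iff.mp hune with ⟨i, hi⟩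
      exact Finset.card_pos.mpr
        ⟨i, Finset.mem_filter.mpr ⟨Finset.mem_univ _, by simpa using hi⟩⟩
    have hvuK : v + u ∈ K := K.add_mem hvK' huK
    have := hvmax (v + u) (Finset.mem_filter.mpr ⟨Finset.mem_univ _, hvuK⟩)
    omega
  · -- sum over S is 0
    have hfv : f v = 0 := hvK'
    rw [hf, Fintype.linearCombination_apply] at hfv
    calc ∑ i ∈ S, x i = ∑ i ∈ S, v i • x i := by
          refine Finset.sum_congr rfl fun i hi => ?_
          rw [hone _ (Finset.mem_filter.mp hi).2, one_smul]
      _ = ∑ i, v i • x i := by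
          refine Finset.sum_subset (Finset.subset_univ _) fun i _ hi => ?_
          simp only [hS, Finset.mem_filter, Finset.mem_univ, true_and, not_not] at hi
          rw [hi, zero_smul]
      _ = 0 := hfv
end
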